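/- arXiv:1901.04211 — 2 statements merged into one kernel-verified Lean document; each statement's English description precedes it below -/
import Mathlib

section
/- Let n ≥ 1, let a < b be real numbers, let C be an n×n complex matrix and let D : ℝ → Matrix n n ℂ be continuous on [a,b]. Suppose Y, Z : ℝ → Matrix n n ℂ satisfy, for every s ∈ [a,b], that Y has derivative C·Z(s) at s and Z has derivative −D(s)·Y(s) at s, and suppose det Y(s) ≠ 0 for every s ∈ [a,b]. Then the function H(s) := Z(s)·Y(s)⁻¹ satisfies the matrix Riccati equation: for every s ∈ [a,b], H has derivative −(H(s)·C·H(s) + D(s)) at s. -/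
open Matrix Set

attribute [local instance] Matrix.normedAddCommGroup Matrix.normedSpace

/-!
Differentiating `Y⁻¹` gives `(Y⁻¹)' = -Y⁻¹ Y' Y⁻¹`, from the identity
`A⁻¹ - B⁻¹ = A⁻¹ (B - A) B⁻¹` and the continuity of the matrix inverse at invertible
matrices. The product rule then gives
`(Z Y⁻¹)' = -D Y Y⁻¹ - Z Y⁻¹ C Z Y⁻¹ = -(H C H + D)`.
-/

open Filter Topology

variable {𝕜 : Type*} [NontriviallyNormedField 𝕜]

theorem Matrix.hasDerivAt_iff {m n R : Type*} [Fintype m] [Fintype n] [NormedAddCommGroup R]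
    [NormedSpace 𝕜 R] {f : 𝕜 → Matrix m n R} {f' : Matrix m n R} {x : 𝕜} :
    HasDerivAt f f' x ↔ ∀ i j, HasDerivAt (fun t => f t i j) (f' i j) x :=
  hasDerivAt_pi.trans <| forall_congr' fun _ => hasDerivAt_pi

theorem HasDerivAt.matrix_mul {l m n R : Type*} [Fintype l] [Fintype m] [Fintype n]
    [NormedRing R] [NormedAlgebra 𝕜 R] {f : 𝕜 → Matrix l m R} {g : 𝕜 → Matrix m n R}
    {f' : Matrix l m R} {g' : Matrix m n R} {x : 𝕜}
    (hf : HasDerivAt f f' x) (hg : HasDerivAt g g' x) :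
    HasDerivAt (fun t => f t * g t) (f' * g x + f x * g') x := by
  rw [Matrix.hasDerivAt_iff] at hf hg ⊢
  intro i j
  simp only [Matrix.mul_apply, Matrix.add_apply, ← Finset.sum_add_distrib]
  exact HasDerivAt.fun_sum fun k _ => (hf i k).mul (hg k j)

theorem HasDerivAt.matrix_inv {m K : Type*} [Fintype m] [DecidableEq m] [NormedField K]
    [NormedAlgebra 𝕜 K] {Y : 𝕜 → Matrix m m K} {Y' : Matrix m m K} {x : 𝕜}
    (hY : HasDerivAt Y Y' x) (hdet : (Y x).det ≠ 0) :
    HasDerivAt (fun t => (Y t)⁻¹) (-((Y x)⁻¹ * Y' * (Y x)⁻¹)) x := by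
  have hinv_cont : ContinuousAt (fun t => (Y t)⁻¹) x :=
    (continuousAt_matrix_inv _
      (by simpa [Ring.inverse_eq_inv'] using continuousAt_inv₀ hdet)).comp hY.continuousAt
  have hunit : ∀ᶠ t in 𝓝 x, IsUnit (Y t).det :=
    ((continuous_id.matrix_det.continuousAt.comp hY.continuousAt).eventually_ne hdet).mono
      fun _ => isUnit_iff_ne_zero.mpr
  replace hY := hY.tendsto_slope
  refine hasDerivAt_iff_tendsto_slope.mpr ?_
  have hslope : slope (fun t => (Y t)⁻¹) x =ᶠ[𝓝[≠] x]
      fun t => -((Y t)⁻¹ * slope Y x t * (Y x)⁻¹) := by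
    filter_upwards [nhdsWithin_le_nhds hunit] with t ht
    have hunits : IsUnit (Y t) ↔ IsUnit (Y x) := by
      simp only [isUnit_iff_isUnit_det, ht, isUnit_iff_ne_zero.mpr hdet]
    rw [slope_def_module, slope_def_module, Matrix.inv_sub_inv hunits, ← neg_sub (Y t),
      Matrix.mul_smul, Matrix.smul_mul, Matrix.mul_neg, Matrix.neg_mul, smul_neg]
  refine Tendsto.congr' hslope.symm ?_
  exact (((hinv_cont.tendsto.mono_left nhdsWithin_le_nhds).mul hY).mul_const _).neg

theorem riccati_from_linear_system_general
    (n : ℕ) (a b : ℝ)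
    (C : Matrix (Fin n) (Fin n) ℂ)
    (D : ℝ → Matrix (Fin n) (Fin n) ℂ)
    (Y Z : ℝ → Matrix (Fin n) (Fin n) ℂ)
    (hY : ∀ s ∈ Set.Icc a b, HasDerivAt Y (C * Z s) s)
    (hZ : ∀ s ∈ Set.Icc a b, HasDerivAt Z (-(D s * Y s)) s)
    (hdet : ∀ s ∈ Set.Icc a b, (Y s).det ≠ 0) :
    ∀ s ∈ Set.Icc a b,
      HasDerivAt (fun s => Z s * (Y s)⁻¹)
        (-((Z s * (Y s)⁻¹) * C * (Z s * (Y s)⁻¹) + D s)) s := by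
  intro s hs
  have hYY : Y s * (Y s)⁻¹ = 1 := Matrix.mul_nonsing_inv _ (isUnit_iff_ne_zero.mpr (hdet s hs))
  convert (hZ s hs).matrix_mul ((hY s hs).matrix_inv (hdet s hs)) using 1
  simp only [neg_mul, mul_neg, mul_assoc, hYY, mul_one, neg_add_rev]

/-- Lemma 3.2 (existence direction): solutions of the first-order linear system
`Y' = C Z`, `Z' = -D Y` with `det Y ≠ 0` give solutions `H = Z Y⁻¹` of the
matrix Riccati equation `H' + H C H + D = 0`. -/
theorem riccati_from_linear_system
    (n : ℕ) (hn : 1 ≤ n) (a b : ℝ) (hab : a < b)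
    (C : Matrix (Fin n) (Fin n) ℂ)
    (D : ℝ → Matrix (Fin n) (Fin n) ℂ)
    (hD : ContinuousOn D (Set.Icc a b))
    (Y Z : ℝ → Matrix (Fin n) (Fin n) ℂ)
    (hY : ∀ s ∈ Set.Icc a b, HasDerivAt Y (C * Z s) s)
    (hZ : ∀ s ∈ Set.Icc a b, HasDerivAt Z (-(D s * Y s)) s)
    (hdet : ∀ s ∈ Set.Icc a b, (Y s).det ≠ 0) :
    ∀ s ∈ Set.Icc a b,
      HasDerivAt (fun s => Z s * (Y s)⁻¹)
        (-((Z s * (Y s)⁻¹) * C * (Z s * (Y s)⁻¹) + D s)) s :=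
  riccati_from_linear_system_general n a b C D Y Z hY hZ hdet
end

section
/- Let T > 0, let f : ℝ → ℂ be continuously differentiable with support contained in the open interval (0,T), and let φ : ℝ → ℂ be twice continuously differentiable on [0,T] with Im φ(τ) ≥ 0 and |φ'(τ)| ≥ 1/2 for every τ ∈ [0,T]. Then there exists C > 0 such that for every ρ ≥ 1 and every t ∈ [0,T], |∫_0^t f(τ) e^{iρφ(τ)} dτ| ≤ C/ρ. -/
open Set intervalIntegral
open scoped Interval

/-!
Since `φ'` does not vanish, `f = g φ'` with `g = f / φ'` a `C¹` function independent of `ρ`, and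
`f e^{iρφ} = (iρ)⁻¹ g (e^{iρφ})'`. Integrating by parts leaves `(iρ)⁻¹` times two boundary terms
and `∫ g' e^{iρφ}`; as `Im φ ≥ 0` gives `|e^{iρφ}| ≤ 1`, these are bounded by `2 sup |g| + ∫ |g'|`.
-/

theorem norm_cexp_I_mul_ofReal_mul_le_one {ρ : ℝ} {z : ℂ} (hρ : 0 ≤ ρ) (hz : 0 ≤ z.im) :
    ‖Complex.exp (Complex.I * ρ * z)‖ ≤ 1 := by
  rw [Complex.norm_exp, Real.exp_le_one_iff]
  simpa using mul_nonneg hρ hz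

section OscillatoryIntegral

variable {a b : ℝ} {g g' φ φ' : ℝ → ℂ}

theorem integral_mul_deriv_mul_cexp_eq {c : ℂ} (hc : c ≠ 0)
    (hg : ∀ x ∈ [[a, b]], HasDerivWithinAt g (g' x) [[a, b]] x)
    (hφ : ∀ x ∈ [[a, b]], HasDerivWithinAt φ (φ' x) [[a, b]] x)
    (hg' : ContinuousOn g' [[a, b]]) (hφ' : ContinuousOn φ' [[a, b]]) :
    ∫ x in a..b, g x * φ' x * Complex.exp (c * φ x) =
      c⁻¹ * (g b * Complex.exp (c * φ b) - g a * Complex.exp (c * φ a) -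
        ∫ x in a..b, g' x * Complex.exp (c * φ x)) := by
  have hv : ∀ x ∈ [[a, b]], HasDerivWithinAt (fun x ↦ Complex.exp (c * φ x))
      (Complex.exp (c * φ x) * (c * φ' x)) [[a, b]] x :=
    fun x hx ↦ ((hφ x hx).const_mul c).cexp
  have hv' : ContinuousOn (fun x ↦ Complex.exp (c * φ x) * (c * φ' x)) [[a, b]] :=
    (continuousOn_const.mul fun x hx ↦ (hφ x hx).continuousWithinAt).cexp.mul
      (continuousOn_const.mul hφ')
  rw [← integral_mul_deriv_eq_deriv_mul_of_hasDerivWithinAt hg hv hg'.intervalIntegrable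
    hv'.intervalIntegrable, ← integral_const_mul]
  congr 1 with x
  field_simp

theorem norm_integral_mul_deriv_mul_cexp_le {ρ : ℝ} (hρ : 0 < ρ)
    (hg : ∀ x ∈ [[a, b]], HasDerivWithinAt g (g' x) [[a, b]] x)
    (hφ : ∀ x ∈ [[a, b]], HasDerivWithinAt φ (φ' x) [[a, b]] x)
    (hg' : ContinuousOn g' [[a, b]]) (hφ' : ContinuousOn φ' [[a, b]])
    (hIm : ∀ x ∈ [[a, b]], 0 ≤ (φ x).im) :
    ‖∫ x in a..b, g x * φ' x * Complex.exp (Complex.I * ρ * φ x)‖ ≤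
      (‖g a‖ + ‖g b‖ + |∫ x in a..b, ‖g' x‖|) / ρ := by
  have hc : Complex.I * ρ ≠ 0 := by simp [hρ.ne']
  have hcnorm : ‖Complex.I * ρ‖ = ρ := by simp [hρ.le]
  have he : ∀ x ∈ [[a, b]], ‖Complex.exp (Complex.I * ρ * φ x)‖ ≤ 1 :=
    fun x hx ↦ norm_cexp_I_mul_ofReal_mul_le_one hρ.le (hIm x hx)
  have hboundary : ∀ x ∈ [[a, b]], ‖g x * Complex.exp (Complex.I * ρ * φ x)‖ ≤ ‖g x‖ :=
    fun x hx ↦ by rw [norm_mul]; exact mul_le_of_le_one_right (norm_nonneg _) (he x hx)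
  have hrest : ‖∫ x in a..b, g' x * Complex.exp (Complex.I * ρ * φ x)‖ ≤
      |∫ x in a..b, ‖g' x‖| := by
    refine norm_integral_le_abs_of_norm_le ?_ hg'.norm.intervalIntegrable
    refine MeasureTheory.ae_restrict_of_forall_mem measurableSet_uIoc fun x hx ↦ ?_
    rw [norm_mul]
    exact mul_le_of_le_one_right (norm_nonneg _) (he x (uIoc_subset_uIcc hx))
  rw [integral_mul_deriv_mul_cexp_eq hc hg hφ hg' hφ', norm_mul, norm_inv, hcnorm,
    inv_mul_eq_div]
  gcongr
  calc _ ≤ ‖g b * Complex.exp (Complex.I * ρ * φ b)‖ +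
        ‖g a * Complex.exp (Complex.I * ρ * φ a)‖ +
        ‖∫ x in a..b, g' x * Complex.exp (Complex.I * ρ * φ x)‖ :=
          (norm_sub_le _ _).trans (add_le_add_left (norm_sub_le _ _) _)
    _ ≤ ‖g b‖ + ‖g a‖ + |∫ x in a..b, ‖g' x‖| := add_le_add
        (add_le_add (hboundary b right_mem_uIcc) (hboundary a left_mem_uIcc)) hrest
    _ = _ := by ring

end OscillatoryIntegral

theorem nonstationary_phase_estimate_general
    (T : ℝ)
    (f : ℝ → ℂ) (hf : ContDiff ℝ 1 f)
    (φ φ' φ'' : ℝ → ℂ)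
    (hφ : ∀ τ ∈ Set.Icc (0:ℝ) T, HasDerivWithinAt φ (φ' τ) (Set.Icc (0:ℝ) T) τ)
    (hφ' : ∀ τ ∈ Set.Icc (0:ℝ) T, HasDerivWithinAt φ' (φ'' τ) (Set.Icc (0:ℝ) T) τ)
    (hφ'' : ContinuousOn φ'' (Set.Icc (0:ℝ) T))
    (hIm : ∀ τ ∈ Set.Icc (0:ℝ) T, 0 ≤ (φ τ).im)
    (hlow : ∀ τ ∈ Set.Icc (0:ℝ) T, 1 / 2 ≤ ‖φ' τ‖) :
    ∃ C > 0, ∀ ρ : ℝ, 1 ≤ ρ → ∀ t ∈ Set.Icc (0:ℝ) T,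
      ‖∫ τ in (0:ℝ)..t, f τ * Complex.exp (Complex.I * ρ * φ τ)‖ ≤ C / ρ := by
  have hφ'0 : ∀ τ ∈ Icc 0 T, φ' τ ≠ 0 :=
    fun τ hτ ↦ norm_pos_iff.mp (one_half_pos.trans_le (hlow τ hτ))
  set g : ℝ → ℂ := fun τ ↦ f τ / φ' τ
  set g' : ℝ → ℂ := fun τ ↦ (deriv f τ * φ' τ - f τ * φ'' τ) / φ' τ ^ 2
  have hg : ∀ τ ∈ Icc 0 T, HasDerivWithinAt g (g' τ) (Icc 0 T) τ := fun τ hτ ↦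
    (hf.differentiable one_ne_zero τ).hasDerivAt.hasDerivWithinAt.div (hφ' τ hτ) (hφ'0 τ hτ)
  have hφ'c : ContinuousOn φ' (Icc 0 T) := fun τ hτ ↦ (hφ' τ hτ).continuousWithinAt
  have hg'c : ContinuousOn g' (Icc 0 T) :=
    (((hf.continuous_deriv le_rfl).continuousOn.mul hφ'c).sub
      (hf.continuous.continuousOn.mul hφ'')).div (hφ'c.pow 2)
      fun τ hτ ↦ pow_ne_zero 2 (hφ'0 τ hτ)
  obtain ⟨M, hM⟩ := isCompact_Icc.exists_bound_of_continuousOn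
    fun τ hτ ↦ (hg τ hτ).continuousWithinAt
  set C := 2 * M + ∫ τ in (0:ℝ)..T, ‖g' τ‖
  refine ⟨max C 1, by positivity, fun ρ hρ t ht ↦ ?_⟩
  have hsub : [[0, t]] ⊆ Icc 0 T := by rw [uIcc_of_le ht.1]; exact Icc_subset_Icc_right ht.2
  have hfg : ∀ τ ∈ [[0, t]], f τ = g τ * φ' τ :=
    fun τ hτ ↦ (div_mul_cancel₀ _ (hφ'0 τ (hsub hτ))).symm
  have hg'int : |∫ τ in (0:ℝ)..t, ‖g' τ‖| ≤ ∫ τ in (0:ℝ)..T, ‖g' τ‖ := by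
    rw [abs_of_nonneg (integral_nonneg ht.1 fun _ _ ↦ norm_nonneg _)]
    exact integral_mono_interval le_rfl ht.1 ht.2
      (Filter.Eventually.of_forall fun _ ↦ norm_nonneg _) (hg'c.norm.intervalIntegrable_of_Icc (ht.1.trans ht.2))
  calc _ = ‖∫ τ in (0:ℝ)..t, g τ * φ' τ * Complex.exp (Complex.I * ρ * φ τ)‖ :=
        congrArg norm (integral_congr fun τ hτ ↦ by rw [hfg τ hτ])
    _ ≤ (‖g 0‖ + ‖g t‖ + |∫ τ in (0:ℝ)..t, ‖g' τ‖|) / ρ :=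
        norm_integral_mul_deriv_mul_cexp_le (by linarith) (fun τ hτ ↦ (hg τ (hsub hτ)).mono hsub)
          (fun τ hτ ↦ (hφ τ (hsub hτ)).mono hsub) (hg'c.mono hsub) (hφ'c.mono hsub)
          fun τ hτ ↦ hIm τ (hsub hτ)
    _ ≤ C / ρ := by
        gcongr
        linarith [hM 0 ⟨le_rfl, ht.1.trans ht.2⟩, hM t ht]
    _ ≤ max C 1 / ρ := by gcongr; exact le_max_left _ _

/-- Non-stationary phase estimate used for the Gaussian beam remainder bounds:
if `f` is `C¹` with support in `(0,T)` and the phase `φ` is `C²` on `[0,T]`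
with `Im φ ≥ 0` and `|φ'| ≥ 1/2`, then
`|∫_0^t f e^{iρφ}| ≤ C/ρ` uniformly for `ρ ≥ 1` and `t ∈ [0,T]`. -/
theorem nonstationary_phase_estimate
    (T : ℝ) (hT : 0 < T)
    (f : ℝ → ℂ) (hf : ContDiff ℝ 1 f)
    (hsupp : Function.support f ⊆ Set.Ioo 0 T)
    (φ φ' φ'' : ℝ → ℂ)
    (hφ : ∀ τ ∈ Set.Icc (0:ℝ) T, HasDerivWithinAt φ (φ' τ) (Set.Icc (0:ℝ) T) τ)
    (hφ' : ∀ τ ∈ Set.Icc (0:ℝ) T, HasDerivWithinAt φ' (φ'' τ) (Set.Icc (0:ℝ) T) τ)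
    (hφ'' : ContinuousOn φ'' (Set.Icc (0:ℝ) T))
    (hIm : ∀ τ ∈ Set.Icc (0:ℝ) T, 0 ≤ (φ τ).im)
    (hlow : ∀ τ ∈ Set.Icc (0:ℝ) T, 1 / 2 ≤ ‖φ' τ‖) :
    ∃ C > 0, ∀ ρ : ℝ, 1 ≤ ρ → ∀ t ∈ Set.Icc (0:ℝ) T,
      ‖∫ τ in (0:ℝ)..t, f τ * Complex.exp (Complex.I * ρ * φ τ)‖ ≤ C / ρ :=
  nonstationary_phase_estimate_general T f hf φ φ' φ'' hφ hφ' hφ'' hIm hlow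
end
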